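/- arXiv:1208.5454 — 2 statements merged into one kernel-verified Lean document; each statement's English description precedes it below -/
import Mathlib

section
/- Define φ : K_S → K_S by sending each non-limit ordinal injectively into the set of limit ordinals, and sending every limit ordinal and ∞ to ∞. Then φ is continuous, has uncountable range, and its only fixed point is ∞. -/
open Topology OnePoint

noncomputable def omega1 : Ordinal := (Cardinal.aleph 1).ord

def IsClubIn (C : Set Ordinal) : Prop :=
  C ⊆ Set.Iio omega1 ∧
  (∀ o, o < omega1 → o ≠ 0 → (∀ p < o, ∃ q ∈ C, p < q ∧ q < o) → o ∈ C) ∧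
  (∀ o, o < omega1 → ∃ p ∈ C, o < p)

/-- The ordinals below `ω₁`. -/
abbrev Om : Type _ := {o : Ordinal // o < omega1}

/-- A ladder system on `ω₁`: for each countable limit ordinal `α`, a strictly increasing
sequence of non-limit ordinals converging to `α`. -/
structure LadderSystem where
  s : Om → ℕ → Om
  strictMono : ∀ α : Om, Order.IsSuccLimit (α : Ordinal) → StrictMono fun n => (s α n : Ordinal)
  notLimit : ∀ α : Om, Order.IsSuccLimit (α : Ordinal) → ∀ n, ¬ Order.IsSuccLimit (s α n : Ordinal)
  lt_self : ∀ α : Om, Order.IsSuccLimit (α : Ordinal) → ∀ n, (s α n : Ordinal) < (α : Ordinal)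
  conv : ∀ α : Om, Order.IsSuccLimit (α : Ordinal) → ∀ β < (α : Ordinal), ∃ n, β < (s α n : Ordinal)

/-- The ladder system topology on `ω₁`: non-limit ordinals are isolated, and a set is a
neighborhood of a limit ordinal `α` iff it contains `α` and cofinitely many points of the
ladder `s_α`. -/
def ladderTop (S : LadderSystem) : TopologicalSpace Om where
  IsOpen U := ∀ α ∈ U, Order.IsSuccLimit (α : Ordinal) → {n | S.s α n ∉ U}.Finite
  isOpen_univ := by intro α _ _; simp
  isOpen_inter := by
    intro U V hU hV α hα hlim
    refine ((hU α hα.1 hlim).union (hV α hα.2 hlim)).subset ?_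
    intro n hn
    simp only [Set.mem_setOf_eq, Set.mem_inter_iff, Set.mem_union] at hn ⊢
    tauto
  isOpen_sUnion := by
    intro T hT α hα hlim
    obtain ⟨t, ht, hαt⟩ := hα
    exact (hT t ht α hαt hlim).subset fun n hn h => hn ⟨t, ht, h⟩

/-- The topology of the one-point compactification `K_S` of the ladder system space. -/
def ksTop (S : LadderSystem) : TopologicalSpace (OnePoint Om) :=
  @OnePoint.instTopologicalSpace Om (ladderTop S)

/-!
Ladders consist of non-limit ordinals, so a limit ordinal has a neighbourhood containing no other
limit ordinal: the limit ordinals form a closed discrete set, and a compact set contains only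
finitely many of them. Since `φ` is injective on the non-limit ordinals and sends them to limit
ordinals, the points of `ω₁` that `φ` maps outside a neighbourhood of `∞` form a finite set of
non-limit ordinals, hence `φ` is continuous. Its range contains the injective image of the
uncountably many successor ordinals, and a fixed point in `ω₁` is impossible because `φ` sends
limits to `∞` and non-limits to limits.
-/

open Order

universe u

lemma isSuccLimit_omega1 : IsSuccLimit omega1.{u} :=
  Cardinal.isSuccLimit_ord (Cardinal.aleph0_le_aleph 1)

lemma not_countable_om : ¬ Countable Om.{u} := by
  rw [← Cardinal.mk_le_aleph0_iff, not_le]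
  show Cardinal.aleph0 < Cardinal.mk (Set.Iio omega1.{u})
  rw [Cardinal.mk_Iio_ordinal, omega1, Cardinal.card_ord, ← Cardinal.lift_aleph0.{u+1, u},
    Cardinal.lift_lt]
  exact Cardinal.aleph0_lt_aleph_one

lemma not_countable_setOf_not_isSuccLimit :
    ¬ {x : Om.{u} | ¬ IsSuccLimit (x : Ordinal)}.Countable := by
  intro h
  refine not_countable_om (Set.countable_univ_iff.mp ?_)
  have hsucc : Set.MapsTo (fun x : Om.{u} => (⟨succ x, isSuccLimit_omega1.succ_lt x.2⟩ : Om))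
      Set.univ {x | ¬ IsSuccLimit (x : Ordinal)} :=
    fun x _ => not_isSuccLimit_succ (x : Ordinal)
  exact hsucc.countable_of_injOn
    (fun x _ y _ hxy => Subtype.ext (succ_injective (congrArg Subtype.val hxy))) h

namespace LadderSystem

variable (S : LadderSystem)

lemma s_injective {α : Om} (hα : IsSuccLimit (α : Ordinal)) : Function.Injective (S.s α) :=
  fun _ _ h => (S.strictMono α hα).injective (congrArg Subtype.val h)

lemma isOpen_of_forall_not_isSuccLimit {U : Set Om}
    (hU : ∀ x ∈ U, ¬ IsSuccLimit (x : Ordinal)) : IsOpen[ladderTop S] U :=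
  fun α hα hlim => (hU α hα hlim).elim

lemma isOpen_of_setOf_not_isSuccLimit_subset {U : Set Om}
    (hU : {x : Om | ¬ IsSuccLimit (x : Ordinal)} ⊆ U) : IsOpen[ladderTop S] U := by
  intro α _ hlim
  simp [hU (S.notLimit α hlim _)]

lemma t1Space_ladderTop : @T1Space Om (ladderTop S) := by
  let := ladderTop S
  refine ⟨fun x => ⟨fun α _ hlim => ?_⟩⟩
  simpa [Set.preimage] using (Set.finite_singleton x).preimage (S.s_injective hlim).injOn

lemma finite_inter_isSuccLimit_of_isCompact {C : Set Om} (hC : @IsCompact Om (ladderTop S) C) :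
    (C ∩ {x | IsSuccLimit (x : Ordinal)}).Finite := by
  let := ladderTop S
  have hclosed : IsClosed {x : Om | IsSuccLimit (x : Ordinal)} :=
    ⟨S.isOpen_of_forall_not_isSuccLimit fun _ hx => hx⟩
  refine (hC.inter_right hclosed).finite (isDiscrete_iff_forall_mem_exists_isOpen.mpr ?_)
  intro y hy
  refine ⟨{x | ¬ IsSuccLimit (x : Ordinal)} ∪ {y},
    S.isOpen_of_setOf_not_isSuccLimit_subset Set.subset_union_left, ?_⟩
  ext x
  simp only [Set.mem_inter_iff, Set.mem_union, Set.mem_ofPred_eq, Set.mem_singleton_iff]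
  constructor
  · rintro ⟨hx | rfl, -, hlim⟩
    exacts [(hx hlim).elim, rfl]
  · rintro rfl
    exact ⟨Or.inr rfl, hy⟩

variable {S} {φ : OnePoint Om → OnePoint Om}

lemma finite_setOf_apply_mem_image_coe
    (hnonLimit : ∀ x : Om, ¬ IsSuccLimit (x : Ordinal) →
      ∃ y : Om, IsSuccLimit (y : Ordinal) ∧ φ ↑x = ↑y)
    (hinjOn : ∀ x y : Om, ¬ IsSuccLimit (x : Ordinal) → ¬ IsSuccLimit (y : Ordinal) →
      φ ↑x = φ ↑y → x = y)
    (hlimit : ∀ x : Om, IsSuccLimit (x : Ordinal) → φ ↑x = ∞)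
    {K : Set Om} (hK : @IsCompact Om (ladderTop S) K) :
    {x : Om | φ x ∈ ((↑) '' K : Set (OnePoint Om))}.Finite := by
  have hA : {x : Om | φ x ∈ ((↑) '' K : Set (OnePoint Om))} ⊆
      {x | ¬ IsSuccLimit (x : Ordinal)} := by
    rintro x ⟨y, -, hy⟩ hx
    rw [hlimit x hx] at hy
    exact OnePoint.coe_ne_infty y hy
  refine Set.Finite.of_finite_image (f := fun x : Om => φ x) ?_
    fun x hx y hy => hinjOn x y (hA hx) (hA hy)
  refine ((S.finite_inter_isSuccLimit_of_isCompact hK).image ((↑) : Om → OnePoint Om)).subset ?_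
  rintro _ ⟨x, ⟨y, hyK, hy⟩, rfl⟩
  obtain ⟨z, hz, hxz⟩ := hnonLimit x (hA ⟨y, hyK, hy⟩)
  rw [hxz] at hy
  exact ⟨z, ⟨OnePoint.coe_injective hy ▸ hyK, hz⟩, hxz.symm⟩

lemma continuous_ksTop
    (hnonLimit : ∀ x : Om, ¬ IsSuccLimit (x : Ordinal) →
      ∃ y : Om, IsSuccLimit (y : Ordinal) ∧ φ ↑x = ↑y)
    (hinjOn : ∀ x y : Om, ¬ IsSuccLimit (x : Ordinal) → ¬ IsSuccLimit (y : Ordinal) →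
      φ ↑x = φ ↑y → x = y)
    (hlimit : ∀ x : Om, IsSuccLimit (x : Ordinal) → φ ↑x = ∞) (hinfty : φ ∞ = ∞) :
    Continuous[ksTop S, ksTop S] φ := by
  let := ladderTop S
  have := S.t1Space_ladderTop
  suffices Continuous φ from this
  refine continuous_def.mpr fun U hU => ?_
  by_cases hU_infty : ∞ ∈ U
  · have hK := ((OnePoint.isOpen_iff_of_mem' hU_infty).mp hU).1
    have hfin : ((↑) ⁻¹' (φ ⁻¹' U) : Set Om)ᶜ.Finite := by
      refine (finite_setOf_apply_mem_image_coe hnonLimit hinjOn hlimit hK).subset fun x hx => ?_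
      have hx : φ x ∉ U := hx
      obtain ⟨y, hy⟩ := OnePoint.ne_infty_iff_exists.mp fun h : φ x = ∞ => hx (h ▸ hU_infty)
      exact ⟨y, fun hyU => hx (hy ▸ hyU), hy⟩
    rw [OnePoint.isOpen_iff_of_mem (by simpa [hinfty])]
    exact ⟨hfin.isClosed, hfin.isCompact⟩
  · rw [OnePoint.isOpen_iff_of_notMem fun h => hU_infty (hinfty ▸ h)]
    exact S.isOpen_of_forall_not_isSuccLimit fun x hx hlim => hU_infty (hlimit x hlim ▸ hx)

end LadderSystem

/-- A map `φ : K_S → K_S` sending the non-limit ordinals injectively into the limit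
ordinals and everything else to `∞` is continuous, has uncountable range, and its only
fixed point is `∞`. -/
theorem stmt14 (S : LadderSystem) (φ : OnePoint Om → OnePoint Om)
    (h1 : ∀ x : Om, ¬ Order.IsSuccLimit (x : Ordinal) → ∃ y : Om, Order.IsSuccLimit (y : Ordinal) ∧ φ ↑x = ↑y)
    (h2 : ∀ x y : Om, ¬ Order.IsSuccLimit (x : Ordinal) → ¬ Order.IsSuccLimit (y : Ordinal) →
      φ ↑x = φ ↑y → x = y)
    (h3 : ∀ x : Om, Order.IsSuccLimit (x : Ordinal) → φ ↑x = ∞)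
    (h4 : φ ∞ = ∞) :
    Continuous[ksTop S, ksTop S] φ ∧ ¬ (Set.range φ).Countable ∧
      ∀ z : OnePoint Om, φ z = z → z = ∞ := by
  refine ⟨LadderSystem.continuous_ksTop h1 h2 h3 h4, fun hcount => ?_, fun z hz => ?_⟩
  · exact not_countable_setOf_not_isSuccLimit <|
      Set.MapsTo.countable_of_injOn (f := fun x : Om => φ x) (fun x _ => Set.mem_range_self _)
        (fun x hx y hy => h2 x y hx hy) hcount
  · induction z using OnePoint.rec with
    | infty => rfl
    | coe x =>
      by_cases hx : IsSuccLimit (x : Ordinal)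
      · rw [h3 x hx] at hz
        exact hz.symm
      · obtain ⟨y, hy, hxy⟩ := h1 x hx
        rw [hxy, OnePoint.coe_eq_coe] at hz
        exact absurd (hz ▸ hy) hx
end

section
/- Let A be a nonstationary subset of L(ω₁) and (s_α)_{α ∈ A} the corresponding ladders of a ladder system. Then there exist finite sets t_α ⊆ s_α such that the sets s_α \ t_α, for α ∈ A, are pairwise disjoint. -/
open Topology OnePoint

/-!
Let `g α` be the largest point of the club `C` (or `0`) below `α`. Since `α ∉ C` and `C` is
closed, `g α < α`, so only finitely many points of the ladder `s_α` lie below `g α`; remove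
them. If `g α < g β` then `α ≤ g β`, so what is left of `s_α` and `s_β` is disjoint. Each
fibre of `g` is countable, being bounded by the next point of `C`, and a countable almost
disjoint family becomes disjoint after removing from each member its (finite) overlaps with
the members enumerated before it.
-/

open Set

section Disjointify

variable {ι κ X : Type*}

theorem Set.Countable.exists_finite_diff_pairwiseDisjoint {I : Set ι} (hI : I.Countable)
    (s : ι → Set X) (had : I.Pairwise fun i j => (s i ∩ s j).Finite) :
    ∃ t : ι → Set X, (∀ i ∈ I, t i ⊆ s i ∧ (t i).Finite) ∧
      I.PairwiseDisjoint fun i => s i \ t i := by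
  obtain ⟨e, he⟩ := Set.countable_iff_exists_injOn.mp hI
  refine ⟨fun i => ⋃ j ∈ {j ∈ I | e j < e i}, s i ∩ s j, fun i hi => ⟨?_, ?_⟩, ?_⟩
  · exact iUnion₂_subset fun j _ => inter_subset_left
  · have hfin : {j ∈ I | e j < e i}.Finite :=
      ((finite_Iio (e i)).subset (image_subset_iff.mpr fun _ hj => hj.2)).of_finite_image
        (he.mono fun _ hj => hj.1)
    refine hfin.biUnion fun j hj => had hi hj.1 ?_
    rintro rfl
    exact lt_irrefl _ hj.2
  · intro i hi j hj hij
    refine disjoint_left.mpr fun x ⟨hxi, hxi'⟩ ⟨hxj, hxj'⟩ => ?_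
    rcases lt_or_gt_of_ne fun h => hij (he hi hj h) with h | h
    · exact hxj' (mem_biUnion ⟨hi, h⟩ ⟨hxj, hxi⟩)
    · exact hxi' (mem_biUnion ⟨hj, h⟩ ⟨hxi, hxj⟩)

theorem exists_finite_diff_pairwiseDisjoint_of_fibers {I : Set ι} (s u : ι → Set X) (f : ι → κ)
    (hfib : ∀ k, (I ∩ f ⁻¹' {k}).Countable) (had : I.Pairwise fun i j => (s i ∩ s j).Finite)
    (hu : ∀ i ∈ I, u i ⊆ s i ∧ (u i).Finite)
    (hsep : ∀ i ∈ I, ∀ j ∈ I, f i ≠ f j → Disjoint (s i \ u i) (s j \ u j)) :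
    ∃ t : ι → Set X, (∀ i ∈ I, t i ⊆ s i ∧ (t i).Finite) ∧
      I.PairwiseDisjoint fun i => s i \ t i := by
  choose t' ht' hdisj using fun k =>
    (hfib k).exists_finite_diff_pairwiseDisjoint s (had.mono inter_subset_left)
  refine ⟨fun i => u i ∪ t' (f i) i, fun i hi => ?_, fun i hi j hj hij => ?_⟩
  · obtain ⟨hus, hufin⟩ := hu i hi
    obtain ⟨hts, htfin⟩ := ht' (f i) i ⟨hi, rfl⟩
    exact ⟨union_subset hus hts, hufin.union htfin⟩
  · by_cases hf : f i = f j
    · refine (hdisj (f i) ⟨hi, rfl⟩ ⟨hj, hf.symm⟩ hij).mono ?_ ?_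
      · exact sdiff_subset_sdiff_right subset_union_right
      · exact hf ▸ sdiff_subset_sdiff_right subset_union_right
    · exact (hsep i hi j hj hf).mono (sdiff_subset_sdiff_right subset_union_left)
        (sdiff_subset_sdiff_right subset_union_left)

end Disjointify

section Club

/-- For closed `C` and `a ∉ C`, the largest element of `C ∪ {0}` below `a` (`sSup ∅ = 0`). -/
noncomputable def supBelow (C : Set Ordinal) (a : Ordinal) : Ordinal :=
  sSup (C ∩ Iio a)

variable {C : Set Ordinal} {a b q : Ordinal}

theorem bddAbove_inter_Iio (C : Set Ordinal) (a : Ordinal) : BddAbove (C ∩ Iio a) :=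
  ⟨a, fun _ hx => hx.2.le⟩

theorem supBelow_le (C : Set Ordinal) (a : Ordinal) : supBelow C a ≤ a :=
  csSup_le' fun _ hx => hx.2.le

theorem le_supBelow (hq : q ∈ C) (hqa : q < a) : q ≤ supBelow C a :=
  le_csSup (bddAbove_inter_Iio C a) ⟨hq, hqa⟩

theorem supBelow_mem (hC : IsClubIn C) (ha : a < omega1) (h0 : supBelow C a ≠ 0) :
    supBelow C a ∈ C := by
  by_cases hmem : supBelow C a ∈ C ∩ Iio a
  · exact hmem.1
  have hne : (C ∩ Iio a).Nonempty := by
    by_contra h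
    exact h0 (by rw [supBelow, not_nonempty_iff_eq_empty.mp h, csSup_empty]; rfl)
  refine hC.2.1 _ ((supBelow_le C a).trans_lt ha) h0 fun p hp => ?_
  obtain ⟨q, hq, hpq⟩ := exists_lt_of_lt_csSup hne hp
  exact ⟨q, hq.1, hpq, (le_supBelow hq.1 hq.2).lt_of_ne fun h => hmem (h ▸ hq)⟩

theorem supBelow_lt (hC : IsClubIn C) (ha : a < omega1) (ha0 : a ≠ 0) (haC : a ∉ C) :
    supBelow C a < a := by
  refine (supBelow_le C a).lt_of_ne fun h => haC ?_
  rw [← h] at ha0 ⊢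
  exact supBelow_mem hC ha ha0

theorem le_supBelow_of_supBelow_lt (hC : IsClubIn C) (hb : b < omega1)
    (h : supBelow C a < supBelow C b) : a ≤ supBelow C b := by
  by_contra! hlt
  have hmem := supBelow_mem hC hb (ne_bot_of_gt h)
  exact (le_supBelow hmem hlt).not_gt h

theorem countable_Iio_of_lt_omega1 {c : Ordinal} (h : c < omega1) : (Iio c).Countable := by
  rw [← Cardinal.le_aleph0_iff_set_countable, Cardinal.mk_Iio_ordinal, Cardinal.lift_le_aleph0,
    ← Cardinal.lt_aleph_one_iff]
  exact Cardinal.lt_ord.mp h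

theorem countable_supBelow_fiber (hC : IsClubIn C) (c : Ordinal) :
    {α : Om | supBelow C α = c}.Countable := by
  by_cases hc : c < omega1
  · obtain ⟨d, hdC, hcd⟩ := hC.2.2 c hc
    have hsub : {α : Om | supBelow C α = c} ⊆ Subtype.val ⁻¹' Iic d := fun α hα => by
      by_contra hα'
      exact (le_supBelow hdC (not_le.mp hα')).not_gt (hα ▸ hcd)
    refine Countable.mono hsub (Countable.preimage ?_ Subtype.val_injective)
    rw [← Iio_insert]
    exact (countable_Iio_of_lt_omega1 (hC.1 hdC)).insert d
  · convert countable_empty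
    refine eq_empty_of_forall_notMem fun α hα => hc ?_
    exact hα ▸ (supBelow_le C α).trans_lt α.2

end Club

namespace LadderSystem

variable (S : LadderSystem) {α β : Om}

theorem range_subset (hα : Order.IsSuccLimit (α : Ordinal)) :
    range (S.s α) ⊆ {x : Om | (x : Ordinal) < α} := by
  rintro _ ⟨n, rfl⟩
  exact S.lt_self α hα n

theorem finite_range_inter_le (hα : Order.IsSuccLimit (α : Ordinal)) {c : Ordinal}
    (hc : c < α) : (range (S.s α) ∩ {x : Om | (x : Ordinal) ≤ c}).Finite := by
  obtain ⟨n₀, hn₀⟩ := S.conv α hα c hc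
  refine ((finite_Iio n₀).image (S.s α)).subset ?_
  rintro _ ⟨⟨n, rfl⟩, hn⟩
  refine ⟨n, ?_, rfl⟩
  by_contra h
  exact (hn₀.trans_le ((S.strictMono α hα).monotone (not_lt.mp h))).not_ge hn

theorem finite_range_inter_range (hα : Order.IsSuccLimit (α : Ordinal))
    (hβ : Order.IsSuccLimit (β : Ordinal)) (hne : α ≠ β) :
    (range (S.s α) ∩ range (S.s β)).Finite := by
  wlog h : (α : Ordinal) < β generalizing α β
  · rw [inter_comm]
    exact this hβ hα hne.symm ((Subtype.coe_injective.ne hne).lt_or_gt.resolve_left h)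
  exact (S.finite_range_inter_le hβ h).subset
    fun x ⟨hxα, hxβ⟩ => ⟨hxβ, show (x : Ordinal) ≤ α from (S.range_subset hα hxα).le⟩

theorem disjoint_range_diff_supBelow {C : Set Ordinal} (hC : IsClubIn C)
    (hα : Order.IsSuccLimit (α : Ordinal)) (hβ : Order.IsSuccLimit (β : Ordinal))
    (hne : supBelow C α ≠ supBelow C β) :
    Disjoint (range (S.s α) \ {x : Om | (x : Ordinal) ≤ supBelow C α})
      (range (S.s β) \ {x : Om | (x : Ordinal) ≤ supBelow C β}) := by
  wlog h : supBelow C α < supBelow C β generalizing α β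
  · exact (this hβ hα hne.symm (hne.lt_or_gt.resolve_left h)).symm
  refine disjoint_left.mpr fun x hxα hxβ => hxβ.2 ?_
  exact (S.range_subset hα hxα.1).le.trans (le_supBelow_of_supBelow_lt hC β.2 h)

end LadderSystem

/-- The ladders indexed by a nonstationary set of limit ordinals can be made pairwise
disjoint by removing finitely many elements from each. -/
theorem stmt16 (S : LadderSystem) (A : Set Om) (hA : ∀ α ∈ A, Order.IsSuccLimit (α : Ordinal))
    (hns : ∃ C : Set Ordinal, IsClubIn C ∧ ∀ α ∈ A, (α : Ordinal) ∉ C) :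
    ∃ t : Om → Set Om, (∀ α ∈ A, t α ⊆ Set.range (S.s α) ∧ (t α).Finite) ∧
      ∀ α ∈ A, ∀ β ∈ A, α ≠ β →
        Disjoint (Set.range (S.s α) \ t α) (Set.range (S.s β) \ t β) := by
  obtain ⟨C, hC, hAC⟩ := hns
  have hlt : ∀ α ∈ A, supBelow C α < α := fun α hα =>
    supBelow_lt hC α.2 (hA α hα).ne_bot (hAC α hα)
  obtain ⟨t, ht, hdisj⟩ := exists_finite_diff_pairwiseDisjoint_of_fibers (I := A)
    (fun α => range (S.s α)) (fun α => range (S.s α) ∩ {x | (x : Ordinal) ≤ supBelow C α})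
    (fun α => supBelow C α)
    (fun c => (countable_supBelow_fiber hC c).mono inter_subset_right)
    (fun α hα β hβ hne => S.finite_range_inter_range (hA α hα) (hA β hβ) hne)
    (fun α hα => ⟨inter_subset_left, S.finite_range_inter_le (hA α hα) (hlt α hα)⟩)
    (fun α hα β hβ hne => by
      simpa only [sdiff_self_inter] using S.disjoint_range_diff_supBelow hC (hA α hα) (hA β hβ) hne)
  exact ⟨t, ht, fun α hα β hβ hne => hdisj hα hβ hne⟩
end
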